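/- Let 𝒞 = (S, Δ, r) be a semimatroid with linear order on S and s = max S a coloop with {s} ∈ Δ. Then s lies in no broken circuit, and the broken circuit complex satisfies BC(𝒞) = {ρ, ρ ∪ {s} : ρ ∈ BC(𝒞 − s)}, i.e., BC(𝒞) is the cone over BC(𝒞 − s) with apex s. -/

import Mathlib

/-- A semimatroid on ground type `α`: a nonempty downward-closed collection `Δ` of finite
subsets (a simplicial complex) together with a rank function `r` satisfying the five
semimatroid axioms of Ardila. -/
structure IsSemimatroid {α : Type*} [DecidableEq α] (Δ : Finset α → Prop) (r : Finset α → ℕ) :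
    Prop where
  nonempty : ∃ σ, Δ σ
  down_closed : ∀ ⦃σ τ : Finset α⦄, Δ σ → τ ⊆ σ → Δ τ
  rank_le_card : ∀ ⦃σ⦄, Δ σ → r σ ≤ σ.card
  rank_mono : ∀ ⦃σ τ⦄, Δ σ → Δ τ → σ ⊆ τ → r σ ≤ r τ
  submodular : ∀ ⦃σ τ⦄, Δ σ → Δ τ → Δ (σ ∪ τ) → r (σ ∪ τ) + r (σ ∩ τ) ≤ r σ + r τ
  union_mem : ∀ ⦃σ τ⦄, Δ σ → Δ τ → r σ = r (σ ∩ τ) → Δ (σ ∪ τ)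
  exchange : ∀ ⦃σ τ⦄, Δ σ → Δ τ → r σ < r τ → ∃ y ∈ τ \ σ, Δ (insert y σ)

/-- A circuit of a semimatroid: a dependent face all of whose proper subsets are
independent. -/
def IsCircuit {α : Type*} (Δ : Finset (Finset α)) (r : Finset α → ℕ) (C : Finset α) : Prop :=
  C ∈ Δ ∧ r C < C.card ∧ ∀ X : Finset α, X ⊂ C → r X = X.card

/-- `σ` contains a broken circuit, i.e. a set `C \ {min C}` for some circuit `C`. -/
def HasBrokenCircuit {α : Type*} [LinearOrder α] (Δ : Finset (Finset α)) (r : Finset α → ℕ)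
    (σ : Finset α) : Prop :=
  ∃ C : Finset α, IsCircuit Δ r C ∧ ∃ h : C.Nonempty, C.erase (C.min' h) ⊆ σ

/-- Membership in the broken circuit complex `BC(𝒞)`: a face containing no broken circuit. -/
def InBC {α : Type*} [LinearOrder α] (Δ : Finset (Finset α)) (r : Finset α → ℕ)
    (σ : Finset α) : Prop :=
  σ ∈ Δ ∧ ¬ HasBrokenCircuit Δ r σ

/-- The deletion complex at `e`. -/
def delC {α : Type*} [DecidableEq α] (Δ : Finset (Finset α)) (e : α) : Finset (Finset α) :=
  Δ.filter (fun τ => e ∉ τ)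

/-- The link (contraction complex) at `e`. -/
def lkC {α : Type*} [DecidableEq α] (Δ : Finset (Finset α)) (e : α) : Finset (Finset α) :=
  (Δ.filter (fun τ => e ∈ τ)).image (fun τ => τ.erase e)

/-- `B` is a basis: an independent face maximal among independent faces. -/
def IsSMBasis {α : Type*} (Δ : Finset (Finset α)) (r : Finset α → ℕ) (B : Finset α) : Prop :=
  B ∈ Δ ∧ r B = B.card ∧ ∀ X ∈ Δ, r X = X.card → B ⊆ X → X = B

/-!
A coloop `s` lies in no circuit: removing it from a circuit `C` leaves an independent set, which
extends to a basis; that basis contains `s`, hence `C`, contradicting the dependence of `C`.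
So the circuits of `𝒞` and `𝒞 − s` coincide, and `s` never occurs in a broken circuit. A face
without broken circuits contains no circuit at all, so it is independent; it therefore extends to
a basis, which contains `s`, and adding `s` to it creates no broken circuit.
-/

namespace HasBrokenCircuit

variable {α : Type*} [LinearOrder α] {Δ : Finset (Finset α)} {r : Finset α → ℕ}
  {σ τ : Finset α}

theorem mono (hσ : HasBrokenCircuit Δ r σ) (hστ : σ ⊆ τ) : HasBrokenCircuit Δ r τ :=
  let ⟨C, hC, hne, hCσ⟩ := hσ
  ⟨C, hC, hne, hCσ.trans hστ⟩

theorem of_insert {s : α} (hs : ∀ C, IsCircuit Δ r C → s ∉ C)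
    (hσ : HasBrokenCircuit Δ r (insert s σ)) : HasBrokenCircuit Δ r σ := by
  obtain ⟨C, hC, hne, hCσ⟩ := hσ
  refine ⟨C, hC, hne, fun x hx => ?_⟩
  have hxs : x ≠ s := fun hxs => hs C hC (Finset.mem_of_mem_erase (hxs ▸ hx))
  exact (Finset.mem_insert.mp (hCσ hx)).resolve_left hxs

end HasBrokenCircuit

theorem exists_isSMBasis_superset {α : Type*} {Δ : Finset (Finset α)} {r : Finset α → ℕ}
    {σ : Finset α} (hσ : σ ∈ Δ) (hrσ : r σ = σ.card) : ∃ B, IsSMBasis Δ r B ∧ σ ⊆ B := by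
  classical
  let T := Δ.filter fun X => r X = X.card ∧ σ ⊆ X
  obtain ⟨B, hBT, hBmax⟩ := T.exists_max_image Finset.card ⟨σ, by simp [T, hσ, hrσ]⟩
  obtain ⟨hBΔ, hrB, hσB⟩ := Finset.mem_filter.mp hBT
  refine ⟨B, ⟨hBΔ, hrB, fun X hXΔ hrX hBX => ?_⟩, hσB⟩
  have hXT : X ∈ T := Finset.mem_filter.mpr ⟨hXΔ, hrX, hσB.trans hBX⟩
  exact (Finset.eq_of_subset_of_card_le hBX (hBmax X hXT)).symm

namespace IsSemimatroid

section DecidableEq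

variable {α : Type*} [DecidableEq α] {Δ : Finset (Finset α)} {r : Finset α → ℕ}
  {s : α} {σ ρ B C : Finset α}

theorem empty_mem (h : IsSemimatroid (· ∈ Δ) r) : ∅ ∈ Δ :=
  let ⟨_, hσ⟩ := h.nonempty
  h.down_closed hσ (Finset.empty_subset _)

theorem rank_empty (h : IsSemimatroid (· ∈ Δ) r) : r ∅ = 0 :=
  Nat.le_zero.mp (by simpa using h.rank_le_card h.empty_mem)

/-- Submodularity on the partition `B = σ ∪ (B \ σ)` forces both parts to have full rank. -/
theorem rank_eq_card_of_subset (h : IsSemimatroid (· ∈ Δ) r) (hB : B ∈ Δ)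
    (hrB : r B = B.card) (hσB : σ ⊆ B) : r σ = σ.card := by
  have hσΔ : σ ∈ Δ := h.down_closed hB hσB
  have hrestΔ : B \ σ ∈ Δ := h.down_closed hB Finset.sdiff_subset
  have hunion : σ ∪ B \ σ = B := Finset.union_sdiff_of_subset hσB
  have hsub := h.submodular hσΔ hrestΔ (by rwa [hunion])
  rw [hunion, Finset.inter_sdiff_self, h.rank_empty] at hsub
  have := h.rank_le_card hσΔ
  have := h.rank_le_card hrestΔ
  have := Finset.card_sdiff_add_card_eq_card hσB
  omega

theorem exists_isCircuit_subset (h : IsSemimatroid (· ∈ Δ) r) (hρ : ρ ∈ Δ)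
    (hrρ : r ρ < ρ.card) : ∃ C, C ⊆ ρ ∧ IsCircuit Δ r C := by
  let T := ρ.powerset.filter fun X => r X < X.card
  obtain ⟨C, hCT, hCmin⟩ := T.exists_min_image Finset.card ⟨ρ, by simp [T, hrρ]⟩
  obtain ⟨hCρ, hrC⟩ := Finset.mem_filter.mp hCT
  rw [Finset.mem_powerset] at hCρ
  refine ⟨C, hCρ, h.down_closed hρ hCρ, hrC, fun X hXC => ?_⟩
  have := h.rank_le_card (h.down_closed hρ (hXC.subset.trans hCρ))
  by_contra hrX
  have hXT : X ∈ T :=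
    Finset.mem_filter.mpr ⟨Finset.mem_powerset.mpr (hXC.subset.trans hCρ), by omega⟩
  exact absurd (hCmin X hXT) (not_le.mpr (Finset.card_lt_card hXC))

theorem notMem_of_isCircuit (h : IsSemimatroid (· ∈ Δ) r)
    (hs : ∀ B, IsSMBasis Δ r B → s ∈ B) (hC : IsCircuit Δ r C) : s ∉ C := by
  intro hsC
  obtain ⟨hCΔ, hrC, hmin⟩ := hC
  obtain ⟨B, hB, hCB⟩ := exists_isSMBasis_superset (h.down_closed hCΔ (C.erase_subset s))
    (hmin _ (Finset.erase_ssubset hsC))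
  have hCB : C ⊆ B := by
    rw [← Finset.insert_erase hsC]
    exact Finset.insert_subset (hs B hB) hCB
  exact hrC.ne (h.rank_eq_card_of_subset hB.1 hB.2.1 hCB)

theorem insert_mem_of_rank_eq_card (h : IsSemimatroid (· ∈ Δ) r)
    (hs : ∀ B, IsSMBasis Δ r B → s ∈ B) (hρ : ρ ∈ Δ) (hrρ : r ρ = ρ.card) :
    insert s ρ ∈ Δ := by
  obtain ⟨B, hB, hρB⟩ := exists_isSMBasis_superset hρ hrρ
  exact h.down_closed hB.1 (Finset.insert_subset (hs B hB) hρB)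

theorem isCircuit_delC_iff (h : IsSemimatroid (· ∈ Δ) r)
    (hs : ∀ B, IsSMBasis Δ r B → s ∈ B) : IsCircuit (delC Δ s) r C ↔ IsCircuit Δ r C :=
  ⟨fun ⟨hC, hrC, hmin⟩ => ⟨(Finset.mem_filter.mp hC).1, hrC, hmin⟩,
    fun hC => ⟨Finset.mem_filter.mpr ⟨hC.1, h.notMem_of_isCircuit hs hC⟩, hC.2⟩⟩

end DecidableEq

section LinearOrder

variable {α : Type*} [LinearOrder α] {Δ : Finset (Finset α)} {r : Finset α → ℕ}
  {s : α} {σ τ ρ : Finset α}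

theorem hasBrokenCircuit_delC_iff (h : IsSemimatroid (· ∈ Δ) r)
    (hs : ∀ B, IsSMBasis Δ r B → s ∈ B) :
    HasBrokenCircuit (delC Δ s) r ρ ↔ HasBrokenCircuit Δ r ρ := by
  simp only [HasBrokenCircuit, h.isCircuit_delC_iff hs]

theorem inBC_delC_iff (h : IsSemimatroid (· ∈ Δ) r) (hs : ∀ B, IsSMBasis Δ r B → s ∈ B) :
    InBC (delC Δ s) r ρ ↔ InBC Δ r ρ ∧ s ∉ ρ := by
  rw [InBC, InBC, h.hasBrokenCircuit_delC_iff hs, delC, Finset.mem_filter]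
  tauto

theorem inBC_of_subset (h : IsSemimatroid (· ∈ Δ) r) (hσ : InBC Δ r σ) (hτσ : τ ⊆ σ) :
    InBC Δ r τ :=
  ⟨h.down_closed hσ.1 hτσ, fun hτ => hσ.2 (hτ.mono hτσ)⟩

/-- A dependent face contains a circuit, and with it that circuit's broken circuit. -/
theorem rank_eq_card_of_inBC (h : IsSemimatroid (· ∈ Δ) r) (hρ : InBC Δ r ρ) :
    r ρ = ρ.card := by
  refine (h.rank_le_card hρ.1).eq_of_not_lt fun hrρ => ?_
  obtain ⟨C, hCρ, hC⟩ := h.exists_isCircuit_subset hρ.1 hrρ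
  have hne : C.Nonempty := Finset.card_pos.mp (Nat.zero_lt_of_lt hC.2.1)
  exact hρ.2 ⟨C, hC, hne, (C.erase_subset _).trans hCρ⟩

theorem inBC_insert_iff (h : IsSemimatroid (· ∈ Δ) r) (hs : ∀ B, IsSMBasis Δ r B → s ∈ B) :
    InBC Δ r (insert s ρ) ↔ InBC Δ r ρ :=
  ⟨fun hρs => h.inBC_of_subset hρs (Finset.subset_insert s ρ),
    fun hρ => ⟨h.insert_mem_of_rank_eq_card hs hρ.1 (h.rank_eq_card_of_inBC hρ),
      fun hρs => hρ.2 (hρs.of_insert fun _ => h.notMem_of_isCircuit hs)⟩⟩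

end LinearOrder

end IsSemimatroid

theorem brokenCircuit_coloop_cone_general {α : Type*} [LinearOrder α]
    (Δ : Finset (Finset α)) (r : Finset α → ℕ)
    (h : IsSemimatroid (· ∈ Δ) r)
    (s : α)
    (hcoloop : ∀ B, IsSMBasis Δ r B → s ∈ B) :
    (∀ C : Finset α, IsCircuit Δ r C → ∀ hC : C.Nonempty, s ∉ C.erase (C.min' hC)) ∧
    (∀ σ : Finset α,
      InBC Δ r σ ↔ ∃ ρ : Finset α, InBC (delC Δ s) r ρ ∧ (σ = ρ ∨ σ = insert s ρ)) := by
  refine ⟨fun C hC _ hsC => h.notMem_of_isCircuit hcoloop hC (Finset.mem_of_mem_erase hsC),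
    fun σ => ⟨fun hσ => ?_, ?_⟩⟩
  · refine ⟨σ.erase s, (h.inBC_delC_iff hcoloop).mpr
      ⟨h.inBC_of_subset hσ (σ.erase_subset s), σ.notMem_erase s⟩, ?_⟩
    by_cases hsσ : s ∈ σ
    · exact Or.inr (Finset.insert_erase hsσ).symm
    · exact Or.inl (Finset.erase_eq_of_notMem hsσ).symm
  · rintro ⟨ρ, hρ, rfl | rfl⟩
    · exact ((h.inBC_delC_iff hcoloop).mp hρ).1
    · exact (h.inBC_insert_iff hcoloop).mpr ((h.inBC_delC_iff hcoloop).mp hρ).1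

/-- Let `s = max S` be a coloop of the semimatroid with `{s} ∈ Δ`. Then `s`
lies in no broken circuit, and `BC(𝒞)` is the cone over `BC(𝒞 − s)` with apex `s`:
`BC(𝒞) = {ρ, ρ ∪ {s} : ρ ∈ BC(𝒞 − s)}`. -/
theorem brokenCircuit_coloop_cone {α : Type*} [LinearOrder α]
    (Δ : Finset (Finset α)) (r : Finset α → ℕ)
    (h : IsSemimatroid (· ∈ Δ) r)
    (s : α) (hmax : ∀ a : α, a ≤ s)
    (hsΔ : ({s} : Finset α) ∈ Δ)
    (hcoloop : ∀ B, IsSMBasis Δ r B → s ∈ B) :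
    (∀ C : Finset α, IsCircuit Δ r C → ∀ hC : C.Nonempty, s ∉ C.erase (C.min' hC)) ∧
    (∀ σ : Finset α,
      InBC Δ r σ ↔ ∃ ρ : Finset α, InBC (delC Δ s) r ρ ∧ (σ = ρ ∨ σ = insert s ρ)) :=
  brokenCircuit_coloop_cone_general Δ r h s hcoloop
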